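/- arXiv:1711.08890 — 2 statements merged into one kernel-verified Lean document; each statement's English description precedes it below -/
import Mathlib

section
/- Every connected {H₁, P₅}-free graph on at least 2 vertices has edge-connectivity equal to its minimum degree. -/
/-!
Suppose deleting a set `F` of fewer than `δ` edges disconnects `G`, and let `A` be a component of
`G - F` and `B` its complement. A cut with fewer than `δ` edges forces each side to contain a vertex
all of whose neighbours lie on that side: `a ∈ A` and `b ∈ B`. Being `P₅`-free, `G` has diameter at
most `3`, so there is a path `a - x - y - b` with `x ∈ A` and `y ∈ B`. Excluding the `P₅`
`z - a - x - y - b` makes every neighbour `z` of `a` adjacent to `x` or `y`; excluding the `H₁`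
formed by the triangles `a z x` and `y w b` then shows that every neighbour of `a` has a neighbour
in `B`, or every neighbour of `b` has one in `A`. In the first case the at least `δ` neighbours of
`a` are distinct endpoints of edges of the cut, and symmetrically in the second, so `|F| ≥ δ`.
-/
open SimpleGraph

/-- The edge-connectivity of `G`: the minimum number of edges whose deletion disconnects `G`. -/
noncomputable def edgeConn {V : Type*} [Fintype V] (G : SimpleGraph V) : ℕ :=
  sInf {k | ∃ F : Finset (Sym2 V), ↑F ⊆ G.edgeSet ∧ F.card = k ∧ ¬ (G.deleteEdges ↑F).Connected}

/-- The minimum degree of `G`. -/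
noncomputable def minDeg {V : Type*} [Fintype V] (G : SimpleGraph V) : ℕ :=
  sInf {d | ∃ v : V, d = (G.neighborSet v).ncard}

/-- `H₁`: the path `0-1-2-3-4-5` together with the chords `0-2` and `3-5`
(two triangles joined by an edge). -/
def H1 : SimpleGraph (Fin 6) :=
  SimpleGraph.fromEdgeSet {s(0,1), s(1,2), s(2,3), s(3,4), s(4,5), s(0,2), s(3,5)}

namespace SimpleGraph

open Finset

variable {V : Type*} {G : SimpleGraph V}

lemma nonempty_pathGraph_five_embedding {v₀ v₁ v₂ v₃ v₄ : V}
    (h₀₁ : G.Adj v₀ v₁) (h₁₂ : G.Adj v₁ v₂) (h₂₃ : G.Adj v₂ v₃) (h₃₄ : G.Adj v₃ v₄)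
    (n₀₂ : ¬G.Adj v₀ v₂) (n₀₃ : ¬G.Adj v₀ v₃) (n₀₄ : ¬G.Adj v₀ v₄)
    (n₁₃ : ¬G.Adj v₁ v₃) (n₁₄ : ¬G.Adj v₁ v₄) (n₂₄ : ¬G.Adj v₂ v₄)
    (d₀₂ : v₀ ≠ v₂) (d₀₃ : v₀ ≠ v₃) (d₀₄ : v₀ ≠ v₄)
    (d₁₃ : v₁ ≠ v₃) (d₁₄ : v₁ ≠ v₄) (d₂₄ : v₂ ≠ v₄) :
    Nonempty (pathGraph 5 ↪g G) := by
  have := h₀₁.ne; have := h₁₂.ne; have := h₂₃.ne; have := h₃₄.ne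
  let f : Fin 5 → V := ![v₀, v₁, v₂, v₃, v₄]
  have hinj : f.Injective := by
    intro i j h; fin_cases i <;> fin_cases j <;> simp_all [f, eq_comm]
  have hadj : ∀ i j, G.Adj (f i) (f j) ↔ (pathGraph 5).Adj i j := by
    intro i j; fin_cases i <;> fin_cases j <;> simp_all [f, pathGraph_adj, G.adj_comm]
  exact ⟨⟨⟨f, hinj⟩, hadj _ _⟩⟩

lemma nonempty_H1_embedding {v₀ v₁ v₂ v₃ v₄ v₅ : V}
    (h₀₁ : G.Adj v₀ v₁) (h₁₂ : G.Adj v₁ v₂) (h₀₂ : G.Adj v₀ v₂) (h₂₃ : G.Adj v₂ v₃)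
    (h₃₄ : G.Adj v₃ v₄) (h₄₅ : G.Adj v₄ v₅) (h₃₅ : G.Adj v₃ v₅)
    (n₀₃ : ¬G.Adj v₀ v₃) (n₀₄ : ¬G.Adj v₀ v₄) (n₀₅ : ¬G.Adj v₀ v₅)
    (n₁₃ : ¬G.Adj v₁ v₃) (n₁₄ : ¬G.Adj v₁ v₄) (n₁₅ : ¬G.Adj v₁ v₅)
    (n₂₄ : ¬G.Adj v₂ v₄) (n₂₅ : ¬G.Adj v₂ v₅)
    (d₀₃ : v₀ ≠ v₃) (d₀₄ : v₀ ≠ v₄) (d₀₅ : v₀ ≠ v₅) (d₁₃ : v₁ ≠ v₃)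
    (d₁₄ : v₁ ≠ v₄) (d₁₅ : v₁ ≠ v₅) (d₂₄ : v₂ ≠ v₄) (d₂₅ : v₂ ≠ v₅) :
    Nonempty (H1 ↪g G) := by
  have := h₀₁.ne; have := h₁₂.ne; have := h₀₂.ne; have := h₂₃.ne
  have := h₃₄.ne; have := h₄₅.ne; have := h₃₅.ne
  let f : Fin 6 → V := ![v₀, v₁, v₂, v₃, v₄, v₅]
  have hinj : f.Injective := by
    intro i j h; fin_cases i <;> fin_cases j <;> simp_all [f, eq_comm]
  have hadj : ∀ i j, G.Adj (f i) (f j) ↔ H1.Adj i j := by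
    intro i j; fin_cases i <;> fin_cases j <;> simp_all [f, H1, G.adj_comm]
  exact ⟨⟨⟨f, hinj⟩, hadj _ _⟩⟩

lemma Walk.dist_getVert_getVert_of_length_eq_dist {u v : V} {p : G.Walk u v}
    (hp : p.length = G.dist u v) {i j : ℕ} (hij : i ≤ j) (hj : j ≤ p.length) :
    G.dist (p.getVert i) (p.getVert j) = j - i := by
  have hsub : ((p.take j).drop i).IsSubwalk p := (isSubwalk_drop _ i).trans (p.isSubwalk_take j)
  have := length_eq_dist_of_subwalk hp hsub
  rw [drop_length, take_length, take_getVert, min_eq_right hij, min_eq_left hj] at this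
  exact this.symm

/-- The first five vertices of a geodesic of length at least `4` induce a `P₅`. -/
lemma Reachable.dist_le_three_of_p5Free (hP5 : IsEmpty (pathGraph 5 ↪g G)) {u v : V}
    (h : G.Reachable u v) : G.dist u v ≤ 3 := by
  by_contra! hlt
  obtain ⟨p, hp⟩ := h.exists_walk_length_eq_dist
  have hadj (i : ℕ) (hi : i < 4 := by decide) : G.Adj (p.getVert i) (p.getVert (i + 1)) :=
    p.adj_getVert_succ (by omega)
  have hnadj (i j : ℕ) (hij : i + 2 ≤ j ∧ j ≤ 4 := by decide) :
      ¬G.Adj (p.getVert i) (p.getVert j) := by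
    rw [← dist_eq_one_iff_adj, p.dist_getVert_getVert_of_length_eq_dist hp (by omega) (by omega)]
    omega
  have hne (i j : ℕ) (hij : i < j ∧ j ≤ 4 := by decide) : p.getVert i ≠ p.getVert j := fun h ↦ by
    have := p.dist_getVert_getVert_of_length_eq_dist hp (i := i) (j := j) (by omega) (by omega)
    rw [h, dist_self] at this
    omega
  obtain ⟨e⟩ := nonempty_pathGraph_five_embedding (hadj 0) (hadj 1) (hadj 2) (hadj 3)
    (hnadj 0 2) (hnadj 0 3) (hnadj 0 4) (hnadj 1 3) (hnadj 1 4) (hnadj 2 4)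
    (hne 0 2) (hne 0 3) (hne 0 4) (hne 1 3) (hne 1 4) (hne 2 4)
  exact hP5.false e

section Separation

variable {s : Set V} {a b x y : V}

lemma exists_adj_adj_adj_of_length_le_three (ha : a ∈ s) (hb : b ∉ s)
    (hNa : G.neighborSet a ⊆ s) (hNb : G.neighborSet b ⊆ sᶜ) (p : G.Walk a b)
    (hp : p.length ≤ 3) : ∃ x y, G.Adj a x ∧ G.Adj x y ∧ G.Adj y b := by
  rcases p with _ | ⟨h₁, _ | ⟨h₂, _ | ⟨h₃, _ | ⟨h₄, p⟩⟩⟩⟩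
  · exact absurd ha hb
  · exact absurd (hNa h₁) hb
  · exact absurd (hNa h₁) (hNb h₂.symm)
  · exact ⟨_, _, h₁, h₂, h₃⟩
  · simp only [Walk.length_cons] at hp
    omega

variable (ha : a ∈ s) (hb : b ∉ s) (hNa : G.neighborSet a ⊆ s) (hNb : G.neighborSet b ⊆ sᶜ)
  (hax : G.Adj a x) (hxy : G.Adj x y) (hyb : G.Adj y b)
include ha hb hNa hNb hax hxy hyb

lemma adj_or_adj_of_p5Free (hP5 : IsEmpty (pathGraph 5 ↪g G)) {z : V} (haz : G.Adj a z) :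
    G.Adj y z ∨ G.Adj x z := by
  by_contra! ⟨hyz, hxz⟩
  have hx : x ∈ s := hNa hax
  have hy : y ∉ s := hNb hyb.symm
  have hz : z ∈ s := hNa haz
  obtain ⟨e⟩ := nonempty_pathGraph_five_embedding haz.symm hax hxy hyb
    (fun h ↦ hxz h.symm) (fun h ↦ hyz h.symm) (fun h ↦ hNb h.symm hz)
    (fun h ↦ hy (hNa h)) (fun h ↦ hb (hNa h)) (fun h ↦ hNb h.symm hx)
    (fun h ↦ hyz (h ▸ hxy.symm)) (ne_of_mem_of_not_mem hz hy) (ne_of_mem_of_not_mem hz hb)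
    (ne_of_mem_of_not_mem ha hy) (ne_of_mem_of_not_mem ha hb) (ne_of_mem_of_not_mem hx hb)
  exact hP5.false e

lemma adj_of_h1Free (hH1 : IsEmpty (H1 ↪g G)) {z w : V}
    (haz : G.Adj a z) (hxz : G.Adj x z) (hyz : ¬G.Adj y z)
    (hbw : G.Adj b w) (hyw : G.Adj y w) (hxw : ¬G.Adj x w) : G.Adj z w := by
  by_contra hzw
  have hx : x ∈ s := hNa hax
  have hy : y ∉ s := hNb hyb.symm
  have hz : z ∈ s := hNa haz
  have hw : w ∉ s := hNb hbw
  obtain ⟨e⟩ := nonempty_H1_embedding haz hxz.symm hax hxy hyw hbw.symm hyb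
    (fun h ↦ hy (hNa h)) (fun h ↦ hw (hNa h)) (fun h ↦ hb (hNa h))
    (fun h ↦ hyz h.symm) hzw (fun h ↦ hNb h.symm hz) hxw (fun h ↦ hNb h.symm hx)
    (ne_of_mem_of_not_mem ha hy) (ne_of_mem_of_not_mem ha hw) (ne_of_mem_of_not_mem ha hb)
    (ne_of_mem_of_not_mem hz hy) (ne_of_mem_of_not_mem hz hw) (ne_of_mem_of_not_mem hz hb)
    (ne_of_mem_of_not_mem hx hw) (ne_of_mem_of_not_mem hx hb)
  exact hH1.false e

lemma forall_adj_exists_adj_compl_or (hH1 : IsEmpty (H1 ↪g G))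
    (hP5 : IsEmpty (pathGraph 5 ↪g G)) :
    (∀ z, G.Adj a z → ∃ w ∈ sᶜ, G.Adj z w) ∨ (∀ z, G.Adj b z → ∃ w ∈ s, G.Adj z w) := by
  by_cases hT : ∃ w, G.Adj b w ∧ G.Adj y w ∧ ¬G.Adj x w
  · obtain ⟨w, hbw, hyw, hxw⟩ := hT
    refine .inl fun z haz ↦ ?_
    by_cases hyz : G.Adj y z
    · exact ⟨y, hNb hyb.symm, hyz.symm⟩
    have hxz := (adj_or_adj_of_p5Free ha hb hNa hNb hax hxy hyb hP5 haz).resolve_left hyz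
    exact ⟨w, hNb hbw, adj_of_h1Free ha hb hNa hNb hax hxy hyb hH1 haz hxz hyz hbw hyw hxw⟩
  · refine .inr fun z hbz ↦ ?_
    by_cases hxz : G.Adj x z
    · exact ⟨x, hNa hax, hxz.symm⟩
    have hyz := (adj_or_adj_of_p5Free (s := sᶜ) hb (not_not.mpr ha) hNb
      (by rwa [compl_compl]) hyb.symm hxy.symm hax.symm hP5 hbz).resolve_left hxz
    exact absurd ⟨z, hbz, hyz, hxz⟩ hT

end Separation

variable [DecidableRel G.Adj]

lemma card_interedges_eq_sum (s t : Finset V) :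
    #(G.interedges s t) = ∑ a ∈ s, #{b ∈ t | G.Adj a b} := by
  rw [interedges_def, card_filter, sum_product]
  simp only [card_filter]

lemma card_interedges_comm (s t : Finset V) : #(G.interedges s t) = #(G.interedges t s) :=
  have := G.symm
  Rel.card_interedges_comm s t

lemma card_filter_exists_adj_le_card_interedges [DecidableEq V] (s t : Finset V) :
    #{a ∈ s | ∃ b ∈ t, G.Adj a b} ≤ #(G.interedges s t) := by
  calc #{a ∈ s | ∃ b ∈ t, G.Adj a b} ≤ #((G.interedges s t).image Prod.fst) := by
        refine card_le_card fun a ha ↦ ?_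
        obtain ⟨has, b, hbt, hab⟩ := mem_filter.mp ha
        exact mem_image.mpr ⟨(a, b), (mk_mem_interedges_iff G).mpr ⟨has, hbt, hab⟩, rfl⟩
    _ ≤ _ := card_image_le

lemma card_interedges_le_card {s t : Finset V} (hst : Disjoint s t) {F : Finset (Sym2 V)}
    (hF : ∀ p ∈ s, ∀ q ∈ t, G.Adj p q → s(p, q) ∈ F) :
    #(G.interedges s t) ≤ #F := by
  refine card_le_card_of_injOn (fun e ↦ s(e.1, e.2)) (fun e he ↦ ?_) fun e he e' he' h ↦ ?_
  · obtain ⟨hp, hq, hpq⟩ := (mem_interedges_iff G).mp he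
    exact hF _ hp _ hq hpq
  · obtain ⟨hp, -, -⟩ := (mem_interedges_iff G).mp he
    obtain ⟨-, hq', -⟩ := (mem_interedges_iff G).mp he'
    rcases Sym2.eq_iff.mp h with ⟨h₁, h₂⟩ | ⟨h₁, -⟩
    · exact Prod.ext h₁ h₂
    · exact (Finset.disjoint_left.mp hst (h₁ ▸ hp) hq').elim

variable [Fintype V]

lemma minDeg_eq_minDegree : minDeg G = G.minDegree := by
  rcases isEmpty_or_nonempty V with hV | hV
  · simp [minDeg, minDegree_of_subsingleton]
  have hncard (w : V) : (G.neighborSet w).ncard = G.degree w := by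
    rw [← Nat.card_coe_set_eq, Nat.card_eq_fintype_card, card_neighborSet_eq_degree]
  obtain ⟨v, hv⟩ := G.exists_minimal_degree_vertex
  refine le_antisymm (Nat.sInf_le ⟨v, by rw [hncard, hv]⟩) (le_csInf ⟨_, v, rfl⟩ ?_)
  rintro _ ⟨w, rfl⟩
  exact hncard w ▸ G.minDegree_le_degree w

variable [DecidableEq V]

lemma degree_le_card_interedges {a : V} {s t : Finset V}
    (h : ∀ z, G.Adj a z → z ∈ s ∧ ∃ w ∈ t, G.Adj z w) :
    G.degree a ≤ #(G.interedges s t) := by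
  rw [← card_neighborFinset_eq_degree]
  refine (card_le_card fun z hz ↦ ?_).trans (card_filter_exists_adj_le_card_interedges s t)
  exact mem_filter.mpr (h z ((mem_neighborFinset G a z).mp hz))

lemma degree_le_card_sub_one_add_card_filter_adj {s : Finset V} {a : V} (ha : a ∈ s) :
    G.degree a ≤ #s - 1 + #{b ∈ sᶜ | G.Adj a b} := by
  have hin : #{b ∈ s | G.Adj a b} ≤ #s - 1 := by
    rw [← card_erase_of_mem ha]
    exact card_le_card fun b hb ↦ by
      obtain ⟨hbs, hab⟩ := mem_filter.mp hb
      exact mem_erase.mpr ⟨hab.ne', hbs⟩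
  calc G.degree a = #(G.neighborFinset a) := (card_neighborFinset_eq_degree G a).symm
    _ ≤ #({b ∈ s | G.Adj a b} ∪ {b ∈ sᶜ | G.Adj a b}) :=
        card_le_card fun b hb ↦ by by_cases b ∈ s <;> simp_all
    _ ≤ #{b ∈ s | G.Adj a b} + #{b ∈ sᶜ | G.Adj a b} := card_union_le _ _
    _ ≤ #s - 1 + #{b ∈ sᶜ | G.Adj a b} := by omega

/-- If every vertex of `s` had a neighbour outside `s`, the cut would have at least `#s` edges
and, summing degrees, at least `#s * (δ + 1 - #s)` edges; together these give at least `δ`. -/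
lemma exists_neighborSet_subset_of_card_interedges_lt {s : Finset V} (hs : s.Nonempty)
    (hcut : #(G.interedges s sᶜ) < G.minDegree) : ∃ a ∈ s, G.neighborSet a ⊆ s := by
  by_contra! h
  have hbdry : #s ≤ #(G.interedges s sᶜ) := by
    have hall : {a ∈ s | ∃ b ∈ sᶜ, G.Adj a b} = s := Finset.filter_true_of_mem fun a ha ↦ by
      obtain ⟨b, hab, hb⟩ := Set.not_subset.mp (h a ha)
      exact ⟨b, mem_compl.mpr hb, hab⟩
    exact (congrArg card hall).symm.le.trans (card_filter_exists_adj_le_card_interedges s sᶜ)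
  have hdeg : #s * G.minDegree ≤ #s * (#s - 1) + #(G.interedges s sᶜ) := by
    rw [card_interedges_eq_sum, ← smul_eq_mul, ← sum_const, ← smul_eq_mul, ← sum_const,
      ← sum_add_distrib]
    exact sum_le_sum fun a ha ↦
      (G.minDegree_le_degree a).trans (degree_le_card_sub_one_add_card_filter_adj ha)
  obtain ⟨m, hm⟩ : ∃ m, #s = m + 1 := ⟨#s - 1, by have := hs.card_pos; omega⟩
  rw [hm, Nat.add_sub_cancel] at hdeg
  rw [hm] at hbdry
  nlinarith [Nat.mul_le_mul_left m (show m + 2 ≤ G.minDegree by omega)]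

lemma minDegree_le_card_interedges_compl (hG : G.Connected) (hH1 : IsEmpty (H1 ↪g G))
    (hP5 : IsEmpty (pathGraph 5 ↪g G)) {t : Finset V} (ht : t.Nonempty) (htc : tᶜ.Nonempty) :
    G.minDegree ≤ #(G.interedges t tᶜ) := by
  by_contra! hcut
  obtain ⟨a, ha, hNa⟩ := exists_neighborSet_subset_of_card_interedges_lt ht hcut
  obtain ⟨b, hb, hNb⟩ := exists_neighborSet_subset_of_card_interedges_lt htc
    (by rwa [compl_compl, card_interedges_comm (G := G)])
  rw [coe_compl] at hNb
  have hb' : b ∉ (t : Set V) := by simpa using hb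
  have hab := hG.preconnected a b
  obtain ⟨p, hp⟩ := hab.exists_walk_length_eq_dist
  obtain ⟨x, y, hax, hxy, hyb⟩ := exists_adj_adj_adj_of_length_le_three (mem_coe.mpr ha) hb'
    hNa hNb p (hp ▸ hab.dist_le_three_of_p5Free hP5)
  rcases forall_adj_exists_adj_compl_or (mem_coe.mpr ha) hb' hNa hNb hax hxy hyb hH1 hP5
    with h | h
  · refine hcut.not_ge ((G.minDegree_le_degree a).trans (degree_le_card_interedges fun z haz ↦ ?_))
    obtain ⟨w, hw, hzw⟩ := h z haz
    exact ⟨hNa haz, w, by simpa using hw, hzw⟩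
  · rw [card_interedges_comm] at hcut
    refine hcut.not_ge ((G.minDegree_le_degree b).trans (degree_le_card_interedges fun z hbz ↦ ?_))
    obtain ⟨w, hw, hzw⟩ := h z hbz
    exact ⟨by simpa using hNb hbz, w, hw, hzw⟩

lemma minDegree_le_card_of_not_connected_deleteEdges (hG : G.Connected)
    (hH1 : IsEmpty (H1 ↪g G)) (hP5 : IsEmpty (pathGraph 5 ↪g G)) {F : Finset (Sym2 V)}
    (hF : ¬(G.deleteEdges ↑F).Connected) : G.minDegree ≤ #F := by
  have : Nonempty V := hG.nonempty
  obtain ⟨u, w, huw⟩ : ∃ u w, ¬(G.deleteEdges ↑F).Reachable u w := by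
    simpa [connected_iff, Preconnected] using hF
  let t : Finset V := {z | (G.deleteEdges ↑F).Reachable u z}
  calc G.minDegree ≤ #(G.interedges t tᶜ) :=
        minDegree_le_card_interedges_compl hG hH1 hP5 ⟨u, by simp [t]⟩ ⟨w, by simpa [t] using huw⟩
    _ ≤ #F := card_interedges_le_card disjoint_compl_right fun p hp q hq hpq ↦ by
        by_contra hpqF
        simp only [t, mem_compl, mem_filter, mem_univ, true_and] at hp hq
        exact hq (hp.trans (deleteEdges_adj.mpr ⟨hpq, hpqF⟩).reachable)

lemma exists_card_eq_degree_not_connected_deleteEdges [Nontrivial V] (v : V) :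
    ∃ F : Finset (Sym2 V), ↑F ⊆ G.edgeSet ∧ F.card = G.degree v ∧
      ¬(G.deleteEdges ↑F).Connected := by
  refine ⟨G.incidenceFinset v, ?_, card_incidenceFinset_eq_degree G v, fun hcon ↦ ?_⟩
  · rw [coe_incidenceFinset]
    exact G.incidenceSet_subset v
  obtain ⟨w, hw⟩ := exists_ne v
  obtain ⟨p⟩ := hcon.preconnected v w
  cases p with
  | nil => exact hw rfl
  | cons h _ =>
    rw [deleteEdges_adj, coe_incidenceFinset] at h
    exact h.2 (G.mk'_mem_incidenceSet_left_iff.mpr h.1)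

end SimpleGraph

/-- Every connected `{H₁, P₅}`-free graph on at least 2 vertices has edge-connectivity
equal to its minimum degree. -/
theorem h1_p5_free_edgeConn_eq_minDeg {V : Type*} [Fintype V] (G : SimpleGraph V)
    (hG : G.Connected) (hcard : 2 ≤ Fintype.card V)
    (hH1 : IsEmpty (H1 ↪g G)) (hP5 : IsEmpty (pathGraph 5 ↪g G)) :
    edgeConn G = minDeg G := by
  classical
  have : Nontrivial V := Fintype.one_lt_card_iff_nontrivial.mp hcard
  obtain ⟨v, hv⟩ := G.exists_minimal_degree_vertex
  have hcut := G.exists_card_eq_degree_not_connected_deleteEdges v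
  rw [minDeg_eq_minDegree, hv]
  refine le_antisymm (Nat.sInf_le hcut) (le_csInf ⟨_, hcut⟩ ?_)
  rintro _ ⟨F, -, rfl, hF⟩
  exact hv ▸ minDegree_le_card_of_not_connected_deleteEdges hG hH1 hP5 hF
end

section
/- For every connected graph S: if every connected S-free graph G satisfies κ'(G) = δ(G), then S is an induced subgraph of P₄. Conversely, if S is an induced subgraph of P₄, then every connected S-free graph on at least 2 vertices satisfies κ'(G) = δ(G). -/
open SimpleGraph

/-!
A shortest path of length three in a connected graph is an induced `P₄`, so connected `P₄`-free
graphs have diameter at most two. If `F` disconnects such a graph into `A` and its complement,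
then on one of the two sides every vertex has a neighbour across the cut (two vertices without
one, on opposite sides, would have no common neighbour); charging the neighbours of a vertex
on that side to edges of `F` gives `|F| ≥ δ`, so `κ' = δ`.

Conversely, two copies of `K₄` and two copies of `C₄`, each pair joined by a bridge, are
connected with `κ' = 1 < δ`, so `S` embeds into both. The second embedding makes `S`
triangle-free. A connected triangle-free graph on at least three vertices has no adjacent twins,
so its image in the first graph meets each `K₄` in at most one vertex besides the end of the
bridge: it lies in the induced `P₄` through the bridge.
-/

namespace SimpleGraph

section MinDeg

variable {V : Type*} [Fintype V] {G : SimpleGraph V}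

lemma minDeg_le_ncard_neighborSet (v : V) : minDeg G ≤ (G.neighborSet v).ncard :=
  Nat.sInf_le ⟨v, rfl⟩

lemma exists_ncard_neighborSet_eq_minDeg [Nonempty V] :
    ∃ v, (G.neighborSet v).ncard = minDeg G := by
  obtain ⟨v, hv⟩ := Nat.sInf_mem (s := {d | ∃ v : V, d = (G.neighborSet v).ncard})
    ⟨_, Classical.arbitrary V, rfl⟩
  exact ⟨v, hv.symm⟩

lemma le_minDeg [Nonempty V] {k : ℕ} (h : ∀ v, k ≤ (G.neighborSet v).ncard) :
    k ≤ minDeg G :=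
  le_csInf ⟨_, Classical.arbitrary V, rfl⟩ (by rintro _ ⟨v, rfl⟩; exact h v)

end MinDeg

lemma ncard_neighborSet_eq_degree {V : Type*} {G : SimpleGraph V} {v : V}
    [Fintype (G.neighborSet v)] : (G.neighborSet v).ncard = G.degree v := by
  rw [Set.ncard_eq_toFinset_card']
  rfl

section Sufficiency

variable {V : Type*} {G : SimpleGraph V}

lemma nonempty_pathGraph_four_embedding {a b c d : V}
    (hab : G.Adj a b) (hbc : G.Adj b c) (hcd : G.Adj c d)
    (hac : ¬ G.Adj a c) (had : ¬ G.Adj a d) (hbd : ¬ G.Adj b d)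
    (hac' : a ≠ c) (had' : a ≠ d) (hbd' : b ≠ d) :
    Nonempty (pathGraph 4 ↪g G) := by
  refine ⟨⟨⟨![a, b, c, d], fun i j h => ?_⟩, fun {i j} => ?_⟩⟩
  · fin_cases i <;> fin_cases j <;>
      simp_all [hab.ne, hbc.ne, hcd.ne, hab.ne', hbc.ne', hcd.ne', eq_comm]
  · change G.Adj (![a, b, c, d] i) (![a, b, c, d] j) ↔ _
    fin_cases i <;> fin_cases j <;>
      simp [pathGraph_adj, hab, hbc, hcd, hac, had, hbd, hab.symm, hbc.symm, hcd.symm,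
        G.adj_comm c a, G.adj_comm d a, G.adj_comm d b]

/-- The ball of radius two around `u` is closed under adjacency: an edge leaving it would end
an induced `P₄` starting at `u`. -/
theorem Connected.exists_adj_adj_of_isEmpty_pathGraph_four (hG : G.Connected)
    (hP : IsEmpty (pathGraph 4 ↪g G)) {u v : V} (huv : u ≠ v) (hadj : ¬ G.Adj u v) :
    ∃ w, G.Adj u w ∧ G.Adj w v := by
  let ball : Set V := {z | z = u ∨ G.Adj u z ∨ ∃ w, G.Adj u w ∧ G.Adj w z}
  suffices hv : v ∈ ball by
    rcases hv with rfl | h | h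
    exacts [(huv rfl).elim, (hadj h).elim, h]
  by_contra hv
  obtain ⟨p⟩ := hG.preconnected u v
  obtain ⟨⟨⟨x, y⟩, hxy⟩, -, hx, hy⟩ := p.exists_boundary_dart ball (Or.inl rfl) hv
  simp only [ball, Set.mem_ofPred_eq, not_or, not_exists, not_and] at hx hy
  obtain ⟨hyu, huy, hwy⟩ := hy
  rcases hx with rfl | hux | ⟨w, huw, hwx⟩
  · exact huy hxy
  · exact hwy x hux hxy
  have hxu : x ≠ u := by rintro rfl; exact huy hxy
  have hux : ¬ G.Adj u x := fun hux => hwy x hux hxy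
  have hwy' : w ≠ y := by rintro rfl; exact huy huw
  exact hP.false (nonempty_pathGraph_four_embedding huw hwx hxy hux huy (hwy w huw)
    hxu.symm (Ne.symm hyu) hwy').some

lemma ncard_neighborSet_le_card {A : Set V} {F : Finset (Sym2 V)} {a : V} (ha : a ∈ A)
    (hF : ∀ x y, G.Adj x y → x ∈ A → y ∉ A → s(x, y) ∈ F)
    (hout : ∀ w ∈ A, G.Adj a w → ∃ y ∉ A, G.Adj w y) :
    (G.neighborSet a).ncard ≤ F.card := by
  classical
  choose! out hout_notMem hout_adj using hout
  let charge : V → Sym2 V := fun w => if w ∈ A then s(w, out w) else s(a, w)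
  rw [← Set.ncard_coe_finset]
  refine Set.ncard_le_ncard_of_injOn charge (fun w (hw : G.Adj a w) => ?_) ?_ F.finite_toSet
  · by_cases hwA : w ∈ A
    · simpa [charge, hwA] using hF w _ (hout_adj w hwA hw) hwA (hout_notMem w hwA hw)
    · simpa [charge, hwA] using hF a w hw ha hwA
  intro w (hw : G.Adj a w) w' (hw' : G.Adj a w') h
  by_cases hwA : w ∈ A <;> by_cases hw'A : w' ∈ A <;>
    simp only [charge, hwA, hw'A, if_true, if_false, Sym2.eq_iff] at h
  · rcases h with ⟨h, -⟩ | ⟨rfl, -⟩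
    exacts [h, (hout_notMem _ hw'A hw' hwA).elim]
  · rcases h with ⟨rfl, -⟩ | ⟨rfl, -⟩
    exacts [(hw.ne rfl).elim, (hw'A hwA).elim]
  · rcases h with ⟨rfl, -⟩ | ⟨-, rfl⟩
    exacts [(hw'.ne rfl).elim, (hwA hw'A).elim]
  · rcases h with ⟨-, h⟩ | ⟨rfl, rfl⟩
    exacts [h, rfl]

lemma exists_ncard_neighborSet_le_card_of_not_preconnected
    (hdiam : ∀ u v, u ≠ v → ¬ G.Adj u v → ∃ w, G.Adj u w ∧ G.Adj w v)
    {F : Finset (Sym2 V)} (hF : ¬ (G.deleteEdges ↑F).Preconnected) :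
    ∃ v, (G.neighborSet v).ncard ≤ F.card := by
  obtain ⟨x, y, hxy⟩ : ∃ x y, ¬ (G.deleteEdges ↑F).Reachable x y := by
    simpa [Preconnected] using hF
  let A : Set V := {z | (G.deleteEdges ↑F).Reachable x z}
  have hcut : ∀ a b, G.Adj a b → a ∈ A → b ∉ A → s(a, b) ∈ F := by
    intro a b hab ha hb
    by_contra h
    exact hb (ha.trans (deleteEdges_adj.2 ⟨hab, h⟩).reachable)
  by_cases hA : ∀ w ∈ A, ∃ z ∉ A, G.Adj w z
  · exact ⟨x, ncard_neighborSet_le_card Reachable.rfl hcut fun w hw _ => hA w hw⟩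
  push Not at hA
  obtain ⟨a, ha, ha_in⟩ := hA
  refine ⟨y, ncard_neighborSet_le_card (A := Aᶜ) hxy
    (fun b c hbc hb hc => Sym2.eq_swap ▸ hcut c b hbc.symm (not_not.1 hc) hb) fun b hb _ => ?_⟩
  obtain ⟨w, haw, hwb⟩ := hdiam a b (fun h => hb (h ▸ ha)) (ha_in b hb)
  exact ⟨w, not_not.2 (by_contra fun hw => ha_in w hw haw), hwb.symm⟩

variable [Fintype V]

lemma exists_disconnecting_card_eq_ncard_neighborSet (hV : 1 < Fintype.card V) (v : V) :
    ∃ F : Finset (Sym2 V), ↑F ⊆ G.edgeSet ∧ F.card = (G.neighborSet v).ncard ∧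
      ¬ (G.deleteEdges ↑F).Connected := by
  classical
  refine ⟨G.incidenceFinset v, by simpa using G.incidenceSet_subset v, by
    rw [card_incidenceFinset_eq_degree, ncard_neighborSet_eq_degree], fun h => ?_⟩
  obtain ⟨u, hu⟩ := Fintype.exists_ne_of_one_lt_card hV v
  obtain ⟨p⟩ := h.preconnected v u
  obtain ⟨⟨⟨x, y⟩, hxy⟩, -, hx, -⟩ := p.exists_boundary_dart {v} rfl hu
  obtain rfl : x = v := hx
  rw [deleteEdges_adj] at hxy
  exact hxy.2 (by simpa using hxy.1)

theorem edgeConn_eq_minDeg_of_forall_exists_adj_adj (hV : 1 < Fintype.card V)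
    (hdiam : ∀ u v, u ≠ v → ¬ G.Adj u v → ∃ w, G.Adj u w ∧ G.Adj w v) :
    edgeConn G = minDeg G := by
  have : Nonempty V := Fintype.card_pos_iff.1 (by omega)
  obtain ⟨v, hv⟩ := exists_ncard_neighborSet_eq_minDeg (G := G)
  have hv_mem := exists_disconnecting_card_eq_ncard_neighborSet (G := G) hV v
  refine le_antisymm (hv ▸ Nat.sInf_le hv_mem) (le_csInf ⟨_, hv_mem⟩ ?_)
  rintro k ⟨F, -, rfl, hF⟩
  obtain ⟨u, hu⟩ := exists_ncard_neighborSet_le_card_of_not_preconnected hdiam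
    fun h => hF ((connected_iff _).2 ⟨h, inferInstance⟩)
  exact (minDeg_le_ncard_neighborSet u).trans hu

end Sufficiency

section BridgedPair

variable {V : Type*}

instance {W : Type*} {G : SimpleGraph V} {H : SimpleGraph W} [DecidableRel G.Adj]
    [DecidableRel H.Adj] : DecidableRel (G ⊕g H).Adj
  | .inl a, .inl b => inferInstanceAs (Decidable (G.Adj a b))
  | .inr a, .inr b => inferInstanceAs (Decidable (H.Adj a b))
  | .inl _, .inr _ => isFalse (by simp)
  | .inr _, .inl _ => isFalse (by simp)

/- Mathlib's instance is built with `rw`, which blocks kernel reduction, so `decide` could not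
evaluate adjacency in `bridgedPair` with it. -/
instance [DecidableEq V] {s t : V} : DecidableRel (edge s t).Adj := fun v w =>
  decidable_of_iff _ (edge_adj s t v w).symm

abbrev bridgedPair (H : SimpleGraph V) (r : V) : SimpleGraph (V ⊕ V) :=
  H.sum H ⊔ edge (.inl r) (.inr r)

variable {H : SimpleGraph V}

lemma Connected.bridgedPair (hH : H.Connected) (r : V) : (bridgedPair H r).Connected :=
  hH.sum_sup_edge hH

variable [Fintype V]

lemma edgeConn_bridgedPair_le_one (r : V) : edgeConn (bridgedPair H r) ≤ 1 := by
  have : Nonempty V := ⟨r⟩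
  refine Nat.sInf_le ⟨{s(.inl r, .inr r)}, by simp, Finset.card_singleton _, fun h => ?_⟩
  refine not_connected_sum (G := H) (H := H) (h.mono ?_)
  simp only [Finset.coe_singleton, deleteEdges, bridgedPair, edge, sup_sdiff_right_self]
  exact sdiff_le

lemma le_minDeg_bridgedPair {k : ℕ} (r : V) (h : ∀ v, k ≤ (H.neighborSet v).ncard) :
    k ≤ minDeg (bridgedPair H r) := by
  have : Nonempty V := ⟨r⟩
  refine le_minDeg fun v => le_trans ?_
    (Set.ncard_le_ncard (neighborSet_mono le_sup_left v) (Set.toFinite _))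
  cases v with
  | inl v => rw [neighborSet_sum_inl, Set.ncard_image_of_injective _ Sum.inl_injective]; exact h v
  | inr v => rw [neighborSet_sum_inr, Set.ncard_image_of_injective _ Sum.inr_injective]; exact h v

end BridgedPair

lemma nonempty_embedding_bridgedPair {W V : Type} [Fintype V] {S : SimpleGraph W}
    {H : SimpleGraph V}
    (hforces : ∀ (V : Type) [Fintype V] (G : SimpleGraph V), G.Connected →
      2 ≤ Fintype.card V → IsEmpty (S ↪g G) → edgeConn G = minDeg G)
    (hH : H.Connected) (hdeg : ∀ v, 2 ≤ (H.neighborSet v).ncard) (r : V) :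
    Nonempty (S ↪g bridgedPair H r) := by
  by_contra h
  have hV : 0 < Fintype.card V := Fintype.card_pos_iff.2 ⟨r⟩
  have := hforces _ _ (hH.bridgedPair r) (by rw [Fintype.card_sum]; omega) (not_nonempty_iff.1 h)
  have := edgeConn_bridgedPair_le_one (H := H) r
  have := le_minDeg_bridgedPair r hdeg
  omega

lemma two_le_ncard_neighborSet_top (v : Fin 4) :
    2 ≤ ((⊤ : SimpleGraph (Fin 4)).neighborSet v).ncard := by
  rw [ncard_neighborSet_eq_degree]
  revert v
  decide

lemma two_le_ncard_neighborSet_cycleGraph (v : Fin 4) :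
    2 ≤ ((cycleGraph 4).neighborSet v).ncard := by
  rw [ncard_neighborSet_eq_degree, cycleGraph_degree_three_le]

lemma cliqueFree_three_bridgedPair_cycleGraph : (bridgedPair (cycleGraph 4) 0).CliqueFree 3 := by
  intro t ht
  obtain ⟨a, b, c, hab, hac, hbc, -⟩ := is3Clique_iff.1 ht
  have : ∀ a b c : Fin 4 ⊕ Fin 4, ¬ ((bridgedPair (cycleGraph 4) 0).Adj a b ∧
      (bridgedPair (cycleGraph 4) 0).Adj a c ∧ (bridgedPair (cycleGraph 4) 0).Adj b c) := by
    decide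
  exact this a b c ⟨hab, hac, hbc⟩

section EmbeddingIntoPathGraph

variable {W : Type*} [Fintype W] {S : SimpleGraph W}

lemma Connected.exists_distinguishing_of_adj (hS : S.Connected) (h3 : S.CliqueFree 3)
    (hW : 2 < Fintype.card W) {x y : W} (hxy : S.Adj x y) :
    ∃ z, z ≠ x ∧ z ≠ y ∧ ¬ (S.Adj x z ↔ S.Adj y z) := by
  classical
  obtain ⟨z, -, hz⟩ := Finset.exists_mem_notMem_of_card_lt_card
    (s := {x, y}) (t := Finset.univ) (Finset.card_le_two.trans_lt hW)
  obtain ⟨p⟩ := hS.preconnected x z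
  obtain ⟨⟨⟨a, b⟩, hab⟩, -, ha, hb⟩ :=
    p.exists_boundary_dart {x, y} (by simp) (by simpa using hz)
  simp only [Set.mem_insert_iff, Set.mem_singleton_iff, not_or] at ha hb
  refine ⟨b, hb.1, hb.2, fun htw => h3 {x, y, b} (is3Clique_triple_iff.2 ⟨hxy, ?_⟩)⟩
  rcases ha with rfl | rfl
  · exact ⟨hab, htw.1 hab⟩
  · exact ⟨htw.2 hab, hab⟩

lemma nonempty_embedding_pathGraph_four_of_card_le_two (hS : S.Connected)
    (hW : Fintype.card W ≤ 2) : Nonempty (S ↪g pathGraph 4) := by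
  have hadj : ∀ x y, S.Adj x y ↔ x ≠ y := by
    refine fun x y => ⟨Adj.ne, fun hxy => ?_⟩
    obtain ⟨p⟩ := hS.preconnected x y
    obtain ⟨⟨⟨a, b⟩, hab⟩, -, rfl, hb⟩ := p.exists_boundary_dart {x} rfl hxy.symm
    obtain rfl : b = y := by
      by_contra hby
      have := Fintype.two_lt_card_iff.2 ⟨_, _, _, hxy, Ne.symm hb, fun h => hby h.symm⟩
      omega
    exact hab
  let e := Fintype.equivFin W
  have hle : Fintype.card W ≤ 4 := by omega
  refine ⟨⟨⟨fun x => Fin.castLE hle (e x),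
    fun x y h => e.injective (Fin.castLE_injective _ h)⟩, fun {x y} => ?_⟩⟩
  change (pathGraph 4).Adj (Fin.castLE hle (e x)) (Fin.castLE hle (e y)) ↔ S.Adj x y
  have hx := (e x).isLt
  have hy := (e y).isLt
  rw [pathGraph_adj, hadj, ← e.injective.ne_iff, Fin.val_castLE, Fin.val_castLE, Ne, Fin.ext_iff]
  omega

/-- Collapses each `K₄` of `bridgedPair ⊤ 0` onto an end of `P₄` and the bridge onto its middle
edge; this is injective and reflects adjacency except on pairs of adjacent twins. -/
def bridgedPairProj : Fin 4 ⊕ Fin 4 → Fin 4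
  | .inl 0 => 1
  | .inl _ => 0
  | .inr 0 => 2
  | .inr _ => 3

set_option synthInstance.maxSize 2000 in
lemma bridgedPairProj_spec (a b : Fin 4 ⊕ Fin 4) (hab : a ≠ b) :
    ((bridgedPair ⊤ 0).Adj a b ∧ ∀ c, c ≠ a → c ≠ b →
      ((bridgedPair ⊤ 0).Adj a c ↔ (bridgedPair ⊤ 0).Adj b c)) ∨
    (bridgedPairProj a ≠ bridgedPairProj b ∧
      ((pathGraph 4).Adj (bridgedPairProj a) (bridgedPairProj b) ↔
        (bridgedPair ⊤ 0).Adj a b)) := by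
  simp only [pathGraph_adj]
  revert a b
  decide

lemma nonempty_embedding_pathGraph_four (hS : S.Connected) (h3 : S.CliqueFree 3)
    (hW : 2 < Fintype.card W) (f : S ↪g bridgedPair ⊤ (0 : Fin 4)) :
    Nonempty (S ↪g pathGraph 4) := by
  have key : ∀ x y, x ≠ y → bridgedPairProj (f x) ≠ bridgedPairProj (f y) ∧
      ((pathGraph 4).Adj (bridgedPairProj (f x)) (bridgedPairProj (f y)) ↔ S.Adj x y) := by
    intro x y hxy
    rcases bridgedPairProj_spec (f x) (f y) (f.injective.ne hxy) with ⟨hadj, htw⟩ | h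
    · obtain ⟨z, hzx, hzy, hz⟩ := hS.exists_distinguishing_of_adj h3 hW (f.map_adj_iff.1 hadj)
      have := htw (f z) (f.injective.ne hzx) (f.injective.ne hzy)
      rw [f.map_adj_iff, f.map_adj_iff] at this
      exact (hz this).elim
    · rwa [f.map_adj_iff] at h
  refine ⟨⟨⟨bridgedPairProj ∘ f, fun x y h => by_contra fun hxy => (key x y hxy).1 h⟩,
    fun {x y} => ?_⟩⟩
  by_cases hxy : x = y
  · subst hxy
    simp
  · exact (key x y hxy).2

end EmbeddingIntoPathGraph

end SimpleGraph

/-- Characterization of single forbidden subgraphs forcing `κ' = δ`: a connected graph `S`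
has the property that every connected `S`-free graph (on ≥ 2 vertices) satisfies
`κ'(G) = δ(G)` if and only if `S` is an induced subgraph of `P₄`. -/
theorem single_forbidden_characterization {W : Type} [Fintype W]
    (S : SimpleGraph W) (hS : S.Connected) :
    ((∀ (V : Type) [Fintype V] (G : SimpleGraph V), G.Connected → 2 ≤ Fintype.card V →
        IsEmpty (S ↪g G) → edgeConn G = minDeg G) →
      Nonempty (S ↪g pathGraph 4)) ∧
    (Nonempty (S ↪g pathGraph 4) →
      ∀ (V : Type) [Fintype V] (G : SimpleGraph V), G.Connected → 2 ≤ Fintype.card V →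
        IsEmpty (S ↪g G) → edgeConn G = minDeg G) := by
  refine ⟨fun hforces => ?_, fun ⟨e⟩ V _ G hG hV hfree => ?_⟩
  · rcases le_or_gt (Fintype.card W) 2 with hW | hW
    · exact nonempty_embedding_pathGraph_four_of_card_le_two hS hW
    obtain ⟨f⟩ := nonempty_embedding_bridgedPair hforces connected_top
      two_le_ncard_neighborSet_top 0
    obtain ⟨g⟩ := nonempty_embedding_bridgedPair hforces cycleGraph_connected
      two_le_ncard_neighborSet_cycleGraph 0
    exact nonempty_embedding_pathGraph_four hS
      (cliqueFree_three_bridgedPair_cycleGraph.comap g.isContained) hW f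
  · have hP4 : IsEmpty (pathGraph 4 ↪g G) := ⟨fun f => hfree.false (f.comp e)⟩
    exact edgeConn_eq_minDeg_of_forall_exists_adj_adj hV fun u v huv h =>
      hG.exists_adj_adj_of_isEmpty_pathGraph_four hP4 huv h
end
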